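/- arXiv:math/9309212 — 2 statements merged into one kernel-verified Lean document; each statement's English description precedes it below -/
import Mathlib

section
/- Turnbull's symmetric identity (operator form). Fix n ≥ 1 and let S be the polynomial ring over R in the commuting variables x_{i,j} = x_{j,i} (1 ≤ i ≤ j ≤ n), i.e. variables indexed by unordered pairs from {1,…,n}. Set p̃_{i,j} := (1 + δ_{i,j})·P_{i,j} (so p̃_{i,i} = 2 P_{i,i} and p̃_{i,j} = P_{i,j} for i ≠ j). For 1 ≤ i,j ≤ n define the operator A_{i,j} := (∑_{k=1}^n X_{k,i} ∘ p̃_{k,j}) + h·(n−i)·δ_{i,j}·id. Then ∑_{σ ∈ S_n} sgn(σ) · A_{σ(1),1} ∘ A_{σ(2),2} ∘ ⋯ ∘ A_{σ(n),n} = (∑_{σ ∈ S_n} sgn(σ) · X_{σ(1),1} ∘ ⋯ ∘ X_{σ(n),n}) ∘ (∑_{τ ∈ S_n} sgn(τ) · p̃_{τ(1),1} ∘ ⋯ ∘ p̃_{τ(n),n}), i.e. the column-ordered determinant of A equals det X composed with det p̃. -/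
/-- Multiplication by the symmetric variable `x_{i,j} = x_{j,i}` on the polynomial
ring in variables indexed by unordered pairs from `{1,…,n}`. -/
noncomputable def turnX (n : ℕ) (R : Type*) [CommRing R] (i j : Fin n) :
    Module.End R (MvPolynomial (Sym2 (Fin n)) R) :=
  LinearMap.mulLeft R (MvPolynomial.X s(i, j))

/-- The momentum operator `p_{i,j} = h ∂/∂x_{i,j}`, symmetric in its indices. -/
noncomputable def turnP (n : ℕ) (R : Type*) [CommRing R] (h : R) (i j : Fin n) :
    Module.End R (MvPolynomial (Sym2 (Fin n)) R) :=
  h • (MvPolynomial.pderiv s(i, j)).toLinearMap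

/-- `p̃_{i,j} = (1 + δ_{i,j}) p_{i,j}`, i.e. the off-diagonal entries are `p_{i,j}`
and the diagonal entries are doubled. -/
noncomputable def turnPt (n : ℕ) (R : Type*) [CommRing R] (h : R) (i j : Fin n) :
    Module.End R (MvPolynomial (Sym2 (Fin n)) R) :=
  (if i = j then 2 else 1 : ℕ) • turnP n R h i j

/-- The Turnbull operator `A_{i,j} = ∑_k X_{k,i} ∘ p̃_{k,j} + h (n - i) δ_{i,j} id`
(indices written `1,…,n`, so the `Fin n` index `i` corresponds to `i+1`). -/
noncomputable def turnA (n : ℕ) (R : Type*) [CommRing R] (h : R) (i j : Fin n) :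
    Module.End R (MvPolynomial (Sym2 (Fin n)) R) :=
  (∑ k : Fin n, turnX n R k i * turnPt n R h k j) +
    (if i = j then h * (((n : ℤ) - ((i : ℕ) + 1) : ℤ) : R) else 0) • 1

open Finset Equiv

section Helpers

variable {β : Type*} [Monoid β] {n : ℕ}

lemma key_ncp : ∀ (m₁ m₂ : Multiset β) (h₁ : {x | x ∈ m₁}.Pairwise Commute)
    (h₂ : {x | x ∈ m₂}.Pairwise Commute), m₁ = m₂ →
    Multiset.noncommProd m₁ h₁ = Multiset.noncommProd m₂ h₂ := by
  rintro m₁ m₂ h₁ h₂ rfl; rfl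

lemma ncp_comp_perm (f : Fin n → β) (e : Equiv.Perm (Fin n)) (c c') :
    Finset.univ.noncommProd (fun i => f (e i)) c' = Finset.univ.noncommProd f c := by
  refine key_ncp _ _ _ _ ?_
  have h1 : (Finset.univ.map e.toEmbedding).val.map f = Finset.univ.val.map f := by
    rw [Finset.map_univ_equiv]
  rw [Finset.map_val, Multiset.map_map] at h1
  exact h1

lemma ncp_perm_congr (f g : Fin n → β) (e : Equiv.Perm (Fin n))
    (hfg : ∀ i, g i = f (e i)) (c c') :
    Finset.univ.noncommProd g c' = Finset.univ.noncommProd f c := by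
  have h1 : Finset.univ.noncommProd g c' =
      Finset.univ.noncommProd (fun i => f (e i)) (by
        intro a _ b _ hab
        have := c' (Finset.mem_coe.mpr (Finset.mem_univ a)) (Finset.mem_coe.mpr (Finset.mem_univ b)) hab
        simpa [Function.onFun, hfg] using this) :=
    Finset.noncommProd_congr rfl (fun x _ => hfg x) _
  rw [h1]
  exact ncp_comp_perm f e c _

lemma ofFn_prod_eq_ncp (f : Fin n → β) (hc) :
    (List.ofFn f).prod = Finset.univ.noncommProd f hc := by
  rw [Finset.noncommProd]
  have h0 : ((List.ofFn f : List β) : Multiset β) = Finset.univ.val.map f :=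
    (Fin.univ_val_map f).symm
  have hcl : {x | x ∈ ((List.ofFn f : List β) : Multiset β)}.Pairwise Commute := by
    rw [h0]; exact Finset.noncommProd_lemma _ _ hc
  rw [← Multiset.noncommProd_coe (List.ofFn f) hcl]
  exact key_ncp _ _ _ _ h0

end Helpers

/-- Tail index set `{i | m ≤ i}`. -/
def tS (n m : ℕ) : Finset (Fin n) := Finset.univ.filter (fun i => m ≤ (i : ℕ))

/-- Admissible tail row-choices: pinned to `id` on the head. -/
def KK (n m : ℕ) : Finset (Fin n → Fin n) :=
  Finset.univ.filter (fun k => ∀ i : Fin n, (i : ℕ) < m → k i = i)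

variable {n : ℕ}

lemma tS_top : tS n n = ∅ := by
  unfold tS
  apply Finset.filter_false_of_mem
  intro i _
  omega

lemma tS_insert (m : ℕ) (hm : m < n) : tS n m = insert ⟨m, hm⟩ (tS n (m + 1)) := by
  unfold tS
  ext i
  simp only [Finset.mem_filter, Finset.mem_univ, true_and, Finset.mem_insert, Fin.ext_iff]
  omega

lemma not_mem_tS_succ (m : ℕ) (hm : m < n) : (⟨m, hm⟩ : Fin n) ∉ tS n (m + 1) := by
  unfold tS
  simp

lemma card_tS (m : ℕ) (hmn : m ≤ n) : (tS n m).card = n - m := by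
  classical
  have : tS n m = Finset.map
      ⟨fun i : Fin (n - m) => (⟨m + (i : ℕ), by omega⟩ : Fin n), by
        intro a b hab
        simp only [Fin.mk.injEq, Fin.ext_iff] at hab ⊢
        omega⟩ Finset.univ := by
    ext i
    unfold tS
    rw [Finset.mem_map, Finset.mem_filter]
    simp only [Finset.mem_univ, true_and, Function.Embedding.coeFn_mk]
    constructor
    · intro hi
      refine ⟨⟨(i : ℕ) - m, by omega⟩, ?_⟩
      apply Fin.ext
      show m + ((i : ℕ) - m) = (i : ℕ)
      omega
    · rintro ⟨a, -, rfl⟩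
      exact Nat.le_add_right m (a : ℕ)
  rw [this, Finset.card_map, Finset.card_univ, Fintype.card_fin]

lemma KK_top : KK n n = {fun i => i} := by
  unfold KK
  ext k
  simp only [Finset.mem_filter, Finset.mem_univ, true_and, Finset.mem_singleton]
  constructor
  · intro hk
    funext i
    exact hk i i.isLt
  · rintro rfl
    exact fun i _ => rfl


/-- Abstract data for the Turnbull identity. -/
structure TurnData (E : Type*) [Ring E] (n : ℕ) where
  X : Fin n → Fin n → E
  Y : Fin n → Fin n → E
  h : E
  hXc : ∀ a b c d, Commute (X a b) (X c d)
  hYc : ∀ a b c d, Commute (Y a b) (Y c d)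
  hXs : ∀ a b, X a b = X b a
  hh : ∀ z : E, Commute h z
  hYX : ∀ k i l j, Y k i * X l j =
    X l j * Y k i + ((if k = l ∧ i = j then h else 0) + (if k = j ∧ i = l then h else 0))

namespace TurnData

variable {E : Type*} [Ring E] {n : ℕ} (D : TurnData E n)

/-- The Turnbull matrix entry (column `i`, row `σ i`). -/
def tA (σ : Perm (Fin n)) (i : Fin n) : E :=
  (∑ v : Fin n, D.X v (σ i) * D.Y v i) + (if σ i = i then (n - 1 - (i : ℕ)) • D.h else 0)

/-- Head: ordered product of the first `m` columns of `A`. -/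
def hd (m : ℕ) (σ : Perm (Fin n)) : E := ((List.ofFn fun i => D.tA σ i).take m).prod

def tX (m : ℕ) (σ : Perm (Fin n)) (k : Fin n → Fin n) : E :=
  (tS n m).noncommProd (fun i => D.X (k i) (σ i)) (fun a _ b _ _ => D.hXc _ _ _ _)

def tXe (m : ℕ) (i : Fin n) (σ : Perm (Fin n)) (k : Fin n → Fin n) : E :=
  ((tS n m).erase i).noncommProd (fun j => D.X (k j) (σ j)) (fun a _ b _ _ => D.hXc _ _ _ _)

def tY (m : ℕ) (k : Fin n → Fin n) : E :=
  (tS n m).noncommProd (fun i => D.Y (k i) i) (fun a _ b _ _ => D.hYc _ _ _ _)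

/-- The interpolating quantity. -/
def SS (m : ℕ) : E :=
  ∑ σ : Perm (Fin n), (Perm.sign σ : ℤ) •
    (D.hd m σ * ∑ k ∈ KK n m, D.tX m σ k * D.tY m k)

lemma hd_congr (m : ℕ) (hmn : m ≤ n) (σ σ' : Perm (Fin n))
    (H : ∀ j : Fin n, (j : ℕ) < m → σ j = σ' j) :
    D.hd m σ = D.hd m σ' := by
  unfold hd
  rw [← Fin.ofFn_take_eq_take_ofFn hmn, ← Fin.ofFn_take_eq_take_ofFn hmn]
  refine congrArg _ (congrArg _ (funext fun i => ?_))
  unfold Fin.take tA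
  simp only []
  rw [H (Fin.castLE hmn i) (by simpa using i.isLt)]

lemma hd_succ (m : ℕ) (hm : m < n) (σ : Perm (Fin n)) :
    D.hd (m + 1) σ = D.hd m σ * D.tA σ ⟨m, hm⟩ := by
  unfold hd
  rw [List.prod_take_succ _ _ (by simpa using hm)]
  congr 1
  simp only [List.get_eq_getElem, List.getElem_ofFn]

lemma KK_split (m : ℕ) (hm : m < n) (F : (Fin n → Fin n) → E) :
    ∑ k ∈ KK n m, F k =
      ∑ v : Fin n, ∑ k ∈ KK n (m + 1), F (Function.update k ⟨m, hm⟩ v) := by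
  classical
  set M : Fin n := ⟨m, hm⟩ with hM
  rw [← Finset.sum_product']
  refine Finset.sum_nbij' (i := fun k => ((k M, Function.update k M M) : Fin n × (Fin n → Fin n)))
    (j := fun p => Function.update p.2 M p.1) ?_ ?_ ?_ ?_ ?_
  · intro k hk
    unfold KK at hk ⊢
    simp only [Finset.mem_filter, Finset.mem_univ, true_and] at hk
    rw [Finset.mem_product]
    refine ⟨Finset.mem_univ _, ?_⟩
    simp only [Finset.mem_filter, Finset.mem_univ, true_and]
    intro i hi
    rcases eq_or_ne i M with rfl | hne
    · rw [Function.update_self]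
    · rw [Function.update_of_ne hne]
      apply hk
      have : (i : ℕ) ≠ m := fun hc => hne (Fin.ext hc)
      omega
  · intro p hp
    rw [Finset.mem_product] at hp
    unfold KK at hp ⊢
    simp only [Finset.mem_filter, Finset.mem_univ, true_and] at hp ⊢
    intro i hi
    have hne : i ≠ M := by
      intro hc
      rw [hc] at hi
      simp only [hM] at hi
      omega
    rw [Function.update_of_ne hne]
    exact hp i (by omega)
  · intro k hk
    unfold KK at hk
    simp only [Finset.mem_filter, Finset.mem_univ, true_and] at hk
    simp only [Function.update_idem, Function.update_eq_self]
  · intro p hp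
    rw [Finset.mem_product] at hp
    unfold KK at hp
    simp only [Finset.mem_filter, Finset.mem_univ, true_and] at hp
    have hp2 : p.2 M = M := hp M (by simp [hM])
    show (Function.update p.2 M p.1 M, Function.update (Function.update p.2 M p.1) M M) = p
    rw [Function.update_self, Function.update_idem]
    have h3 : Function.update p.2 M M = p.2 := by
      funext i
      rcases eq_or_ne i M with rfl | hne
      · rw [Function.update_self, hp2]
      · rw [Function.update_of_ne hne]
    rw [h3]
  · intro k hk
    rw [Function.update_idem, Function.update_eq_self]

lemma tX_update (m : ℕ) (hm : m < n) (σ : Perm (Fin n)) (k : Fin n → Fin n) (v : Fin n) :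
    D.tX (m + 1) σ (Function.update k ⟨m, hm⟩ v) = D.tX (m + 1) σ k := by
  unfold tX
  apply Finset.noncommProd_congr rfl
  intro i hi
  unfold tS at hi
  simp only [Finset.mem_filter] at hi
  rw [Function.update_of_ne]
  intro hiM
  rw [hiM] at hi
  simp only [Fin.mk.injEq] at hi
  omega

lemma tY_update (m : ℕ) (hm : m < n) (k : Fin n → Fin n) (v : Fin n) :
    D.tY (m + 1) (Function.update k ⟨m, hm⟩ v) = D.tY (m + 1) k := by
  unfold tY
  apply Finset.noncommProd_congr rfl
  intro i hi
  unfold tS at hi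
  simp only [Finset.mem_filter] at hi
  rw [Function.update_of_ne]
  intro hiM
  rw [hiM] at hi
  simp only [Fin.mk.injEq] at hi
  omega

lemma tX_lower (m : ℕ) (hm : m < n) (σ : Perm (Fin n)) (k : Fin n → Fin n) :
    D.tX m σ k = D.X (k ⟨m, hm⟩) (σ ⟨m, hm⟩) * D.tX (m + 1) σ k := by
  unfold tX
  rw [Finset.noncommProd_congr (tS_insert m hm) (fun _ _ => rfl)
    (fun a _ b _ _ => D.hXc _ _ _ _)]
  exact Finset.noncommProd_insert_of_notMem _ _ _ _ (not_mem_tS_succ m hm)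

lemma tY_lower (m : ℕ) (hm : m < n) (k : Fin n → Fin n) :
    D.tY m k = D.Y (k ⟨m, hm⟩) ⟨m, hm⟩ * D.tY (m + 1) k := by
  unfold tY
  rw [Finset.noncommProd_congr (tS_insert m hm) (fun _ _ => rfl)
    (fun a _ b _ _ => D.hYc _ _ _ _)]
  exact Finset.noncommProd_insert_of_notMem _ _ _ _ (not_mem_tS_succ m hm)

lemma tX_insert_back (m : ℕ) (i : Fin n) (hi : i ∈ tS n m) (σ : Perm (Fin n))
    (k : Fin n → Fin n) :
    D.X (k i) (σ i) * D.tXe m i σ k = D.tX m σ k := by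
  unfold tXe tX
  exact Finset.mul_noncommProd_erase (tS n m) hi (fun j => D.X (k j) (σ j)) (fun a _ b _ _ => D.hXc _ _ _ _)

/-- Pushing an element past a noncommProd, with central corrections. -/
lemma push (y : E) (f c : Fin n → E) (hf : ∀ i, y * f i = f i * y + c i)
    (hc : ∀ i z, Commute (c i) z) (hcm : ∀ i j, Commute (f i) (f j)) (s : Finset (Fin n)) :
    y * s.noncommProd f (fun a _ b _ _ => hcm a b) =
      s.noncommProd f (fun a _ b _ _ => hcm a b) * y +
        ∑ i ∈ s, c i * (s.erase i).noncommProd f (fun a _ b _ _ => hcm a b) := by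
  classical
  induction s using Finset.induction_on with
  | empty =>
    show y * 1 = 1 * y + 0
    simp
  | @insert a s ha ih =>
    erw [Finset.noncommProd_insert_of_notMem _ _ _ _ ha]
    rw [Finset.sum_insert ha]
    have step1 : y * (f a * Finset.noncommProd s f (fun a _ b _ _ => hcm a b)) =
        f a * (y * Finset.noncommProd s f (fun a _ b _ _ => hcm a b)) +
          c a * Finset.noncommProd s f (fun a _ b _ _ => hcm a b) := by
      rw [← mul_assoc, hf a, add_mul, mul_assoc]
    rw [step1, ih]
    rw [Finset.erase_insert ha]
    have step2 : ∀ i ∈ s, f a * (c i * Finset.noncommProd (s.erase i) f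
          (fun a _ b _ _ => hcm a b)) =
        c i * Finset.noncommProd ((insert a s).erase i) f (fun a _ b _ _ => hcm a b) := by
      intro i hi
      have hia : a ≠ i := fun hc => ha (hc ▸ hi)
      rw [Finset.erase_insert_of_ne hia]
      erw [Finset.noncommProd_insert_of_notMem _ _ _ _ (fun hc => ha (Finset.mem_of_mem_erase hc))]
      rw [← mul_assoc, ← (hc i (f a)).eq, mul_assoc]
    rw [mul_add, Finset.mul_sum, Finset.sum_congr rfl step2, ← mul_assoc]
    abel

/-- The central commutator coefficient. -/
def cc (v w l j : Fin n) : E :=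
  (if v = l ∧ w = j then D.h else 0) + (if v = j ∧ w = l then D.h else 0)

lemma cc_comm (v w l j : Fin n) (z : E) : Commute (D.cc v w l j) z := by
  unfold cc
  apply Commute.add_left <;> split_ifs
  · exact D.hh z
  · exact Commute.zero_left z
  · exact D.hh z
  · exact Commute.zero_left z

lemma pushY (m : ℕ) (σ : Perm (Fin n)) (v w : Fin n) (k : Fin n → Fin n) :
    D.Y v w * D.tX m σ k = D.tX m σ k * D.Y v w +
      ∑ i ∈ tS n m, D.cc v w (k i) (σ i) * D.tXe m i σ k :=
  push (D.Y v w) (fun i => D.X (k i) (σ i)) (fun i => D.cc v w (k i) (σ i))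
    (fun i => D.hYX v w (k i) (σ i)) (fun i z => D.cc_comm v w (k i) (σ i) z)
    (fun i j => D.hXc _ _ _ _) (tS n m)

/-- Tail sum `T`. -/
def TT (m : ℕ) (σ : Perm (Fin n)) : E := ∑ k ∈ KK n (m + 1), D.tX (m + 1) σ k * D.tY (m + 1) k

/-- The diagonal piece `W`. -/
def Wd (m : ℕ) (hm : m < n) : E :=
  ∑ σ : Perm (Fin n), (Perm.sign σ : ℤ) •
    (D.hd m σ * (if σ ⟨m, hm⟩ = ⟨m, hm⟩ then D.h * D.TT m σ else 0))

lemma main_eq (m : ℕ) (hm : m < n) :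
    ∑ σ : Perm (Fin n), (Perm.sign σ : ℤ) •
      (D.hd m σ * ∑ v : Fin n, ∑ k ∈ KK n (m + 1),
        D.X v (σ ⟨m, hm⟩) * (D.tX (m + 1) σ k * (D.Y v ⟨m, hm⟩ * D.tY (m + 1) k))) =
      D.SS m := by
  unfold SS
  apply Finset.sum_congr rfl
  intro σ _
  congr 1
  congr 1
  rw [KK_split m hm (F := fun k => D.tX m σ k * D.tY m k)]
  apply Finset.sum_congr rfl
  intro v _
  apply Finset.sum_congr rfl
  intro k hk
  rw [D.tX_lower m hm, D.tY_lower m hm, D.tX_update m hm, D.tY_update m hm,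
    Function.update_self]
  exact (mul_assoc _ _ _).symm

lemma tXe_congr (m : ℕ) (i : Fin n) (σ σ' : Perm (Fin n)) (k : Fin n → Fin n)
    (H : ∀ j ∈ (tS n m).erase i, σ j = σ' j) : D.tXe m i σ k = D.tXe m i σ' k := by
  unfold tXe
  exact Finset.noncommProd_congr rfl (fun x hx => by rw [H x hx]) _

lemma swap_fix (m : ℕ) (hm : m < n) (i : Fin n) (hi : i ∈ tS n (m + 1)) (j : Fin n)
    (hj : (j : ℕ) ≠ m ∧ j ≠ i) : Equiv.swap (⟨m, hm⟩ : Fin n) i j = j := by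
  apply Equiv.swap_apply_of_ne_of_ne
  · intro hc
    exact hj.1 (by rw [hc])
  · exact hj.2

lemma i_val (m : ℕ) (i : Fin n) (hi : i ∈ tS n (m + 1)) : m + 1 ≤ (i : ℕ) := by
  unfold tS at hi
  simpa using (Finset.mem_filter.mp hi).2

lemma CB_zero (m : ℕ) (hm : m < n) (i : Fin n) (hi : i ∈ tS n (m + 1)) :
    ∑ σ : Perm (Fin n), (Perm.sign σ : ℤ) •
      (D.hd m σ * ∑ k ∈ KK n (m + 1),
        (if (⟨m, hm⟩ : Fin n) = k i then
          D.X (σ i) (σ ⟨m, hm⟩) * ((D.h * D.tXe (m + 1) i σ k) * D.tY (m + 1) k) else 0)) =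
      0 := by
  classical
  set M : Fin n := ⟨m, hm⟩ with hMdef
  have hiM : i ≠ M := by
    have := i_val m i hi
    intro hc
    rw [hc, hMdef] at this
    simp at this
  apply Finset.sum_involution (g := fun σ _ => σ * Equiv.swap M i)
  · intro σ _
    have hhd : D.hd m (σ * Equiv.swap M i) = D.hd m σ := by
      apply D.hd_congr m (le_of_lt hm)
      intro j hj
      have : Equiv.swap M i j = j := by
        apply swap_fix m hm i hi
        constructor
        · omega
        · intro hc
          have := i_val m i hi
          rw [hc] at hj
          omega
      rw [Equiv.Perm.mul_apply, this]
    have hinner : ∀ k ∈ KK n (m + 1),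
        (if M = k i then D.X ((σ * Equiv.swap M i) i) ((σ * Equiv.swap M i) M) *
          ((D.h * D.tXe (m + 1) i (σ * Equiv.swap M i) k) * D.tY (m + 1) k) else 0) =
        (if M = k i then D.X (σ i) (σ M) *
          ((D.h * D.tXe (m + 1) i σ k) * D.tY (m + 1) k) else 0) := by
      intro k _
      have h1 : (σ * Equiv.swap M i) i = σ M := by
        rw [Equiv.Perm.mul_apply, Equiv.swap_apply_right]
      have h2 : (σ * Equiv.swap M i) M = σ i := by
        rw [Equiv.Perm.mul_apply, Equiv.swap_apply_left]
      have h3 : D.tXe (m + 1) i (σ * Equiv.swap M i) k = D.tXe (m + 1) i σ k := by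
        apply D.tXe_congr
        intro j hj
        rw [Finset.mem_erase] at hj
        have hjv := i_val m j hj.2
        have : Equiv.swap M i j = j := by
          apply swap_fix m hm i hi
          exact ⟨by omega, hj.1⟩
        rw [Equiv.Perm.mul_apply, this]
      rw [h1, h2, h3, D.hXs (σ M) (σ i)]
    have hsgn : ((Perm.sign (σ * Equiv.swap M i)) : ℤ) = -(Perm.sign σ : ℤ) := by
      rw [Equiv.Perm.sign_mul, Equiv.Perm.sign_swap (Ne.symm hiM)]
      simp
    rw [hhd, Finset.sum_congr rfl hinner, hsgn, neg_smul]
    abel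
  · intro σ _ _ hcon
    have h1 : Equiv.swap M i = 1 := mul_left_cancel (a := σ) (by rw [hcon, mul_one])
    have h2 := congrArg (fun e : Equiv.Perm (Fin n) => e M) h1
    simp only [Equiv.swap_apply_left, Equiv.Perm.one_apply] at h2
    exact hiM h2
  · intro σ _
    exact Finset.mem_univ _
  · intro σ _
    rw [mul_assoc, Equiv.swap_mul_self, mul_one]

lemma CA_eq (m : ℕ) (hm : m < n) (i : Fin n) (hi : i ∈ tS n (m + 1)) :
    ∑ σ : Perm (Fin n), (Perm.sign σ : ℤ) •
      (D.hd m σ * ∑ k ∈ KK n (m + 1),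
        (if (⟨m, hm⟩ : Fin n) = σ i then
          D.X (k i) (σ ⟨m, hm⟩) * ((D.h * D.tXe (m + 1) i σ k) * D.tY (m + 1) k) else 0)) =
      - D.Wd m hm := by
  classical
  set M : Fin n := ⟨m, hm⟩ with hMdef
  have hiM : i ≠ M := by
    have := i_val m i hi
    intro hc
    rw [hc, hMdef] at this
    simp at this
  set t := Equiv.swap M i with ht
  rw [← Equiv.sum_comp (Equiv.mulRight t) (fun σ => (Perm.sign σ : ℤ) •
      (D.hd m σ * ∑ k ∈ KK n (m + 1),
        (if M = σ i then
          D.X (k i) (σ M) * ((D.h * D.tXe (m + 1) i σ k) * D.tY (m + 1) k) else 0)))]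
  unfold Wd
  rw [← Finset.sum_neg_distrib]
  apply Finset.sum_congr rfl
  intro σ _
  simp only [Equiv.coe_mulRight]
  have hhd : D.hd m (σ * t) = D.hd m σ := by
    apply D.hd_congr m (le_of_lt hm)
    intro j hj
    have : t j = j := by
      rw [ht]
      apply swap_fix m hm i hi
      constructor
      · omega
      · intro hc
        have := i_val m i hi
        rw [hc] at hj
        omega
    rw [Equiv.Perm.mul_apply, this]
  have h1 : (σ * t) i = σ M := by
    rw [ht, Equiv.Perm.mul_apply, Equiv.swap_apply_right]
  have h2 : (σ * t) M = σ i := by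
    rw [ht, Equiv.Perm.mul_apply, Equiv.swap_apply_left]
  have hinner : ∑ k ∈ KK n (m + 1),
      (if M = (σ * t) i then D.X (k i) ((σ * t) M) *
        ((D.h * D.tXe (m + 1) i (σ * t) k) * D.tY (m + 1) k) else 0) =
      (if σ M = M then D.h * D.TT m σ else 0) := by
    have h3 : ∀ k : Fin n → Fin n, D.tXe (m + 1) i (σ * t) k = D.tXe (m + 1) i σ k := by
      intro k
      apply D.tXe_congr
      intro j hj
      rw [Finset.mem_erase] at hj
      have hjv := i_val m j hj.2
      have : t j = j := by
        rw [ht]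
        apply swap_fix m hm i hi
        exact ⟨by omega, hj.1⟩
      rw [Equiv.Perm.mul_apply, this]
    by_cases hMM : σ M = M
    · have hcond : M = (σ * t) i := by rw [h1, hMM]
      rw [if_pos hMM]
      have hk : ∀ k ∈ KK n (m + 1),
          (if M = (σ * t) i then D.X (k i) ((σ * t) M) *
            ((D.h * D.tXe (m + 1) i (σ * t) k) * D.tY (m + 1) k) else 0) =
          D.h * (D.tX (m + 1) σ k * D.tY (m + 1) k) := by
        intro k _
        rw [if_pos hcond, h2, h3]
        rw [← mul_assoc, ← mul_assoc, ← (D.hh (D.X (k i) (σ i))).eq,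
          mul_assoc D.h, D.tX_insert_back (m + 1) i hi σ k, mul_assoc]
      rw [Finset.sum_congr rfl hk, ← Finset.mul_sum]
      rfl
    · have hcond : ¬ (M = (σ * t) i) := by
        rw [h1]
        intro hc
        exact hMM hc.symm
      rw [if_neg hMM]
      apply Finset.sum_eq_zero
      intro k _
      rw [if_neg hcond]
  show (Perm.sign (σ * t) : ℤ) • (D.hd m (σ * t) * ∑ k ∈ KK n (m + 1),
      (if M = (σ * t) i then D.X (k i) ((σ * t) M) *
        ((D.h * D.tXe (m + 1) i (σ * t) k) * D.tY (m + 1) k) else 0)) = _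
  rw [hhd, hinner]
  have hsgn : ((Perm.sign (σ * t)) : ℤ) = -(Perm.sign σ : ℤ) := by
    rw [ht, Equiv.Perm.sign_mul, Equiv.Perm.sign_swap (Ne.symm hiM)]
    simp
  rw [hsgn, neg_smul]

lemma diag_eq (m : ℕ) (hm : m < n) :
    ∑ σ : Perm (Fin n), (Perm.sign σ : ℤ) •
      (D.hd m σ * (if σ ⟨m, hm⟩ = ⟨m, hm⟩ then
        ((n - 1 - ((⟨m, hm⟩ : Fin n) : ℕ)) • D.h) * D.TT m σ else 0)) =
      ((n - (m + 1) : ℕ) : ℤ) • D.Wd m hm := by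
  unfold Wd
  rw [Finset.smul_sum]
  apply Finset.sum_congr rfl
  intro σ _
  have hval : ((⟨m, hm⟩ : Fin n) : ℕ) = m := rfl
  have h1 : (if σ ⟨m, hm⟩ = ⟨m, hm⟩ then
      ((n - 1 - ((⟨m, hm⟩ : Fin n) : ℕ)) • D.h) * D.TT m σ else 0) =
      ((n - (m + 1) : ℕ) : ℤ) • (if σ ⟨m, hm⟩ = ⟨m, hm⟩ then D.h * D.TT m σ else 0) := by
    split_ifs with hMM
    · rw [smul_mul_assoc, ← natCast_zsmul]
      congr 1
      rw [hval]
      omega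
    · rw [smul_zero]
  rw [h1, mul_smul_comm, smul_smul, smul_smul, mul_comm]

lemma step (m : ℕ) (hm : m < n) : D.SS (m + 1) = D.SS m := by
  classical
  have hexp : ∀ (σ : Perm (Fin n)) (v : Fin n) (k : Fin n → Fin n),
      (D.X v (σ ⟨m, hm⟩) * D.Y v ⟨m, hm⟩) * (D.tX (m + 1) σ k * D.tY (m + 1) k) =
        D.X v (σ ⟨m, hm⟩) * (D.tX (m + 1) σ k * (D.Y v ⟨m, hm⟩ * D.tY (m + 1) k)) +
          ∑ i ∈ tS n (m + 1), D.X v (σ ⟨m, hm⟩) *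
            ((D.cc v ⟨m, hm⟩ (k i) (σ i) * D.tXe (m + 1) i σ k) * D.tY (m + 1) k) := by
    intro σ v k
    calc (D.X v (σ ⟨m, hm⟩) * D.Y v ⟨m, hm⟩) * (D.tX (m + 1) σ k * D.tY (m + 1) k)
        = D.X v (σ ⟨m, hm⟩) * ((D.Y v ⟨m, hm⟩ * D.tX (m + 1) σ k) * D.tY (m + 1) k) := by
          rw [mul_assoc, ← mul_assoc (D.Y v ⟨m, hm⟩)]
      _ = D.X v (σ ⟨m, hm⟩) * ((D.tX (m + 1) σ k * D.Y v ⟨m, hm⟩ +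
            ∑ i ∈ tS n (m + 1), D.cc v ⟨m, hm⟩ (k i) (σ i) * D.tXe (m + 1) i σ k) *
              D.tY (m + 1) k) := by
          rw [D.pushY (m + 1) σ v ⟨m, hm⟩ k]
      _ = D.X v (σ ⟨m, hm⟩) * ((D.tX (m + 1) σ k * D.Y v ⟨m, hm⟩) * D.tY (m + 1) k) +
            D.X v (σ ⟨m, hm⟩) * ((∑ i ∈ tS n (m + 1),
              D.cc v ⟨m, hm⟩ (k i) (σ i) * D.tXe (m + 1) i σ k) * D.tY (m + 1) k) := by
          rw [add_mul, mul_add]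
      _ = _ := by
          rw [mul_assoc (D.tX (m + 1) σ k), Finset.sum_mul, Finset.mul_sum]
  have hpt : ∀ σ : Perm (Fin n),
      D.hd (m + 1) σ * D.TT m σ =
        (D.hd m σ * ∑ v : Fin n, ∑ k ∈ KK n (m + 1),
            D.X v (σ ⟨m, hm⟩) * (D.tX (m + 1) σ k * (D.Y v ⟨m, hm⟩ * D.tY (m + 1) k)))
          + ((D.hd m σ * ∑ v : Fin n, ∑ k ∈ KK n (m + 1), ∑ i ∈ tS n (m + 1),
              D.X v (σ ⟨m, hm⟩) * ((D.cc v ⟨m, hm⟩ (k i) (σ i) * D.tXe (m + 1) i σ k) *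
                D.tY (m + 1) k))
            + (D.hd m σ * (if σ ⟨m, hm⟩ = ⟨m, hm⟩ then
                ((n - 1 - ((⟨m, hm⟩ : Fin n) : ℕ)) • D.h) * D.TT m σ else 0))) := by
    intro σ
    rw [D.hd_succ m hm σ, mul_assoc, ← mul_add, ← mul_add]
    congr 1
    have h1 : (∑ v : Fin n, D.X v (σ ⟨m, hm⟩) * D.Y v ⟨m, hm⟩) * D.TT m σ =
        (∑ v : Fin n, ∑ k ∈ KK n (m + 1),
            D.X v (σ ⟨m, hm⟩) * (D.tX (m + 1) σ k * (D.Y v ⟨m, hm⟩ * D.tY (m + 1) k)))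
          + (∑ v : Fin n, ∑ k ∈ KK n (m + 1), ∑ i ∈ tS n (m + 1),
              D.X v (σ ⟨m, hm⟩) * ((D.cc v ⟨m, hm⟩ (k i) (σ i) * D.tXe (m + 1) i σ k) *
                D.tY (m + 1) k)) := by
      calc (∑ v : Fin n, D.X v (σ ⟨m, hm⟩) * D.Y v ⟨m, hm⟩) * D.TT m σ
          = ∑ v : Fin n, ∑ k ∈ KK n (m + 1),
              (D.X v (σ ⟨m, hm⟩) * D.Y v ⟨m, hm⟩) * (D.tX (m + 1) σ k * D.tY (m + 1) k) := by
            rw [Finset.sum_mul]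
            exact Finset.sum_congr rfl fun v _ => Finset.mul_sum _ _ _
        _ = ∑ v : Fin n, ∑ k ∈ KK n (m + 1),
              (D.X v (σ ⟨m, hm⟩) * (D.tX (m + 1) σ k * (D.Y v ⟨m, hm⟩ * D.tY (m + 1) k)) +
                ∑ i ∈ tS n (m + 1), D.X v (σ ⟨m, hm⟩) *
                  ((D.cc v ⟨m, hm⟩ (k i) (σ i) * D.tXe (m + 1) i σ k) * D.tY (m + 1) k)) :=
            Finset.sum_congr rfl fun v _ => Finset.sum_congr rfl fun k _ => hexp σ v k
        _ = _ := by
            rw [Finset.sum_congr rfl fun v (_ : v ∈ Finset.univ) => Finset.sum_add_distrib,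
              Finset.sum_add_distrib]
    have h2 : (if σ ⟨m, hm⟩ = ⟨m, hm⟩ then
        (n - 1 - ((⟨m, hm⟩ : Fin n) : ℕ)) • D.h else 0) * D.TT m σ =
        (if σ ⟨m, hm⟩ = ⟨m, hm⟩ then
          ((n - 1 - ((⟨m, hm⟩ : Fin n) : ℕ)) • D.h) * D.TT m σ else 0) := by
      rw [ite_mul, zero_mul]
    calc D.tA σ ⟨m, hm⟩ * D.TT m σ
        = (∑ v : Fin n, D.X v (σ ⟨m, hm⟩) * D.Y v ⟨m, hm⟩) * D.TT m σ +
            (if σ ⟨m, hm⟩ = ⟨m, hm⟩ then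
              (n - 1 - ((⟨m, hm⟩ : Fin n) : ℕ)) • D.h else 0) * D.TT m σ := by
          unfold tA
          rw [add_mul]
      _ = _ := by
          rw [h1, h2, add_assoc]
  have hSS : D.SS (m + 1) = ∑ σ : Perm (Fin n), (Perm.sign σ : ℤ) •
      (D.hd (m + 1) σ * D.TT m σ) := rfl
  rw [hSS]
  calc ∑ σ : Perm (Fin n), (Perm.sign σ : ℤ) • (D.hd (m + 1) σ * D.TT m σ)
      = ∑ σ : Perm (Fin n),
          ((Perm.sign σ : ℤ) • (D.hd m σ * ∑ v : Fin n, ∑ k ∈ KK n (m + 1),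
            D.X v (σ ⟨m, hm⟩) * (D.tX (m + 1) σ k * (D.Y v ⟨m, hm⟩ * D.tY (m + 1) k)))
          + ((Perm.sign σ : ℤ) • (D.hd m σ * ∑ v : Fin n, ∑ k ∈ KK n (m + 1),
              ∑ i ∈ tS n (m + 1), D.X v (σ ⟨m, hm⟩) *
                ((D.cc v ⟨m, hm⟩ (k i) (σ i) * D.tXe (m + 1) i σ k) * D.tY (m + 1) k))
            + (Perm.sign σ : ℤ) • (D.hd m σ * (if σ ⟨m, hm⟩ = ⟨m, hm⟩ then
                ((n - 1 - ((⟨m, hm⟩ : Fin n) : ℕ)) • D.h) * D.TT m σ else 0)))) := by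
        apply Finset.sum_congr rfl
        intro σ _
        rw [hpt σ, smul_add, smul_add]
    _ = (∑ σ : Perm (Fin n), (Perm.sign σ : ℤ) •
          (D.hd m σ * ∑ v : Fin n, ∑ k ∈ KK n (m + 1),
            D.X v (σ ⟨m, hm⟩) * (D.tX (m + 1) σ k * (D.Y v ⟨m, hm⟩ * D.tY (m + 1) k))))
        + ((∑ σ : Perm (Fin n), (Perm.sign σ : ℤ) •
            (D.hd m σ * ∑ v : Fin n, ∑ k ∈ KK n (m + 1), ∑ i ∈ tS n (m + 1),
              D.X v (σ ⟨m, hm⟩) * ((D.cc v ⟨m, hm⟩ (k i) (σ i) * D.tXe (m + 1) i σ k) *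
                D.tY (m + 1) k)))
          + (∑ σ : Perm (Fin n), (Perm.sign σ : ℤ) •
              (D.hd m σ * (if σ ⟨m, hm⟩ = ⟨m, hm⟩ then
                ((n - 1 - ((⟨m, hm⟩ : Fin n) : ℕ)) • D.h) * D.TT m σ else 0)))) := by
        rw [Finset.sum_add_distrib, Finset.sum_add_distrib]
    _ = D.SS m := by
        rw [D.main_eq m hm, D.diag_eq m hm]
        have hcorr : ∑ σ : Perm (Fin n), (Perm.sign σ : ℤ) •
            (D.hd m σ * ∑ v : Fin n, ∑ k ∈ KK n (m + 1), ∑ i ∈ tS n (m + 1),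
              D.X v (σ ⟨m, hm⟩) * ((D.cc v ⟨m, hm⟩ (k i) (σ i) * D.tXe (m + 1) i σ k) *
                D.tY (m + 1) k)) =
            -(((n - (m + 1) : ℕ) : ℤ) • D.Wd m hm) := by
          have hsplit : ∀ (σ : Perm (Fin n)), ∀ i ∈ tS n (m + 1),
              (∑ v : Fin n, ∑ k ∈ KK n (m + 1), D.X v (σ ⟨m, hm⟩) *
                ((D.cc v ⟨m, hm⟩ (k i) (σ i) * D.tXe (m + 1) i σ k) * D.tY (m + 1) k)) =
              (∑ k ∈ KK n (m + 1), (if (⟨m, hm⟩ : Fin n) = σ i then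
                  D.X (k i) (σ ⟨m, hm⟩) * ((D.h * D.tXe (m + 1) i σ k) * D.tY (m + 1) k)
                else 0))
              + (∑ k ∈ KK n (m + 1), (if (⟨m, hm⟩ : Fin n) = k i then
                  D.X (σ i) (σ ⟨m, hm⟩) * ((D.h * D.tXe (m + 1) i σ k) * D.tY (m + 1) k)
                else 0)) := by
            intro σ i hi
            rw [Finset.sum_comm, ← Finset.sum_add_distrib]
            apply Finset.sum_congr rfl
            intro k _
            have hv : ∀ v : Fin n, D.X v (σ ⟨m, hm⟩) *
                ((D.cc v ⟨m, hm⟩ (k i) (σ i) * D.tXe (m + 1) i σ k) * D.tY (m + 1) k) =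
                (if v = k i then (if (⟨m, hm⟩ : Fin n) = σ i then
                  D.X (k i) (σ ⟨m, hm⟩) * ((D.h * D.tXe (m + 1) i σ k) * D.tY (m + 1) k)
                  else 0) else 0)
                + (if v = σ i then (if (⟨m, hm⟩ : Fin n) = k i then
                  D.X (σ i) (σ ⟨m, hm⟩) * ((D.h * D.tXe (m + 1) i σ k) * D.tY (m + 1) k)
                  else 0) else 0) := by
              intro v
              unfold cc
              rw [add_mul, add_mul, mul_add]
              congr 1
              · by_cases e1 : v = k i
                · by_cases e2 : (⟨m, hm⟩ : Fin n) = σ i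
                  · rw [if_pos ⟨e1, e2⟩, if_pos e1, if_pos e2, e1]
                  · rw [if_neg (by tauto), if_pos e1, if_neg e2, zero_mul, zero_mul, mul_zero]
                · rw [if_neg (by tauto), if_neg e1, zero_mul, zero_mul, mul_zero]
              · by_cases e3 : v = σ i
                · by_cases e4 : (⟨m, hm⟩ : Fin n) = k i
                  · rw [if_pos ⟨e3, e4⟩, if_pos e3, if_pos e4, e3]
                  · rw [if_neg (by tauto), if_pos e3, if_neg e4, zero_mul, zero_mul, mul_zero]
                · rw [if_neg (by tauto), if_neg e3, zero_mul, zero_mul, mul_zero]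
            rw [Finset.sum_congr rfl fun v (_ : v ∈ Finset.univ) => hv v,
              Finset.sum_add_distrib, Finset.sum_ite_eq' Finset.univ (k i),
              Finset.sum_ite_eq' Finset.univ (σ i)]
            simp only [Finset.mem_univ, if_true]
          calc ∑ σ : Perm (Fin n), (Perm.sign σ : ℤ) •
              (D.hd m σ * ∑ v : Fin n, ∑ k ∈ KK n (m + 1), ∑ i ∈ tS n (m + 1),
                D.X v (σ ⟨m, hm⟩) * ((D.cc v ⟨m, hm⟩ (k i) (σ i) * D.tXe (m + 1) i σ k) *
                  D.tY (m + 1) k)) =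
              ∑ σ : Perm (Fin n), ∑ i ∈ tS n (m + 1),
                ((Perm.sign σ : ℤ) • (D.hd m σ * ∑ k ∈ KK n (m + 1),
                  (if (⟨m, hm⟩ : Fin n) = σ i then D.X (k i) (σ ⟨m, hm⟩) *
                    ((D.h * D.tXe (m + 1) i σ k) * D.tY (m + 1) k) else 0))
                + (Perm.sign σ : ℤ) • (D.hd m σ * ∑ k ∈ KK n (m + 1),
                  (if (⟨m, hm⟩ : Fin n) = k i then D.X (σ i) (σ ⟨m, hm⟩) *
                    ((D.h * D.tXe (m + 1) i σ k) * D.tY (m + 1) k) else 0))) := by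
                apply Finset.sum_congr rfl
                intro σ _
                rw [show (∑ v : Fin n, ∑ k ∈ KK n (m + 1), ∑ i ∈ tS n (m + 1),
                    D.X v (σ ⟨m, hm⟩) * ((D.cc v ⟨m, hm⟩ (k i) (σ i) * D.tXe (m + 1) i σ k) *
                      D.tY (m + 1) k)) = ∑ i ∈ tS n (m + 1), ∑ v : Fin n, ∑ k ∈ KK n (m + 1),
                    D.X v (σ ⟨m, hm⟩) * ((D.cc v ⟨m, hm⟩ (k i) (σ i) * D.tXe (m + 1) i σ k) *
                      D.tY (m + 1) k) from by
                  rw [Finset.sum_congr rfl fun v (_ : v ∈ Finset.univ) => Finset.sum_comm,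
                    Finset.sum_comm]]
                rw [Finset.sum_congr rfl (hsplit σ), Finset.mul_sum, Finset.smul_sum]
                apply Finset.sum_congr rfl
                intro i _
                rw [mul_add, smul_add]
            _ = ∑ i ∈ tS n (m + 1), ∑ σ : Perm (Fin n),
                ((Perm.sign σ : ℤ) • (D.hd m σ * ∑ k ∈ KK n (m + 1),
                  (if (⟨m, hm⟩ : Fin n) = σ i then D.X (k i) (σ ⟨m, hm⟩) *
                    ((D.h * D.tXe (m + 1) i σ k) * D.tY (m + 1) k) else 0))
                + (Perm.sign σ : ℤ) • (D.hd m σ * ∑ k ∈ KK n (m + 1),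
                  (if (⟨m, hm⟩ : Fin n) = k i then D.X (σ i) (σ ⟨m, hm⟩) *
                    ((D.h * D.tXe (m + 1) i σ k) * D.tY (m + 1) k) else 0))) :=
              Finset.sum_comm
            _ = ∑ i ∈ tS n (m + 1), (-D.Wd m hm + 0) := by
                apply Finset.sum_congr rfl
                intro i hi
                rw [Finset.sum_add_distrib, D.CA_eq m hm i hi, D.CB_zero m hm i hi]
            _ = -(((n - (m + 1) : ℕ) : ℤ) • D.Wd m hm) := by
                rw [Finset.sum_const, card_tS (m + 1) (by omega)]
                rw [add_zero, ← natCast_zsmul, smul_neg]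
        rw [hcorr]
        simp
  

lemma top : D.SS n =
    ∑ σ : Perm (Fin n), (Perm.sign σ : ℤ) • (List.ofFn fun i => D.tA σ i).prod := by
  unfold SS
  apply Finset.sum_congr rfl
  intro σ _
  congr 1
  have h1 : ∑ k ∈ KK n n, D.tX n σ k * D.tY n k = 1 := by
    rw [KK_top, Finset.sum_singleton]
    unfold tX tY
    rw [Finset.noncommProd_congr tS_top (fun _ _ => rfl) (fun a _ b _ _ => D.hXc _ _ _ _),
      Finset.noncommProd_congr tS_top (fun _ _ => rfl) (fun a _ b _ _ => D.hYc _ _ _ _)]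
    exact one_mul 1
  rw [h1, mul_one]
  unfold hd
  rw [List.take_of_length_le (by simp)]

lemma bottom :
    D.SS 0 =
      (∑ σ : Perm (Fin n), (Perm.sign σ : ℤ) • (List.ofFn fun i => D.X (σ i) i).prod) *
        (∑ τ : Perm (Fin n), (Perm.sign τ : ℤ) • (List.ofFn fun i => D.Y (τ i) i).prod) := by
  classical
  have hKK0 : KK n 0 = Finset.univ := by
    unfold KK
    apply Finset.filter_true_of_mem
    intro k _ i hi
    omega
  set F : Perm (Fin n) → E :=
    fun σ => Finset.univ.noncommProd (fun j => D.X j (σ j)) (fun a _ b _ _ => D.hXc _ _ _ _)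
    with hF
  set TY : (Fin n → Fin n) → E :=
    fun k => Finset.univ.noncommProd (fun i => D.Y (k i) i) (fun a _ b _ _ => D.hYc _ _ _ _)
    with hTY
  set TX : Perm (Fin n) → (Fin n → Fin n) → E :=
    fun σ k => Finset.univ.noncommProd (fun i => D.X (k i) (σ i)) (fun a _ b _ _ => D.hXc _ _ _ _)
    with hTX
  have htX : ∀ (σ : Perm (Fin n)) (k : Fin n → Fin n), D.tX 0 σ k = TX σ k := by
    intro σ k
    unfold tX
    apply Finset.noncommProd_congr ?_ (fun _ _ => rfl)
    unfold tS
    apply Finset.filter_true_of_mem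
    intro i _
    omega
  have htY : ∀ k : Fin n → Fin n, D.tY 0 k = TY k := by
    intro k
    unfold tY
    apply Finset.noncommProd_congr ?_ (fun _ _ => rfl)
    unfold tS
    apply Finset.filter_true_of_mem
    intro i _
    omega
  set Z : (Fin n → Fin n) → E :=
    fun k => ∑ σ : Perm (Fin n), (Equiv.Perm.sign σ : ℤ) • (TX σ k * TY k) with hZ
  have e1 : D.SS 0 = ∑ k : Fin n → Fin n, Z k := by
    unfold SS hd
    simp only [List.take_zero, List.prod_nil, one_mul, hKK0, htX, htY, Finset.smul_sum]
    rw [Finset.sum_comm]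
  have hZ0 : ∀ k : Fin n → Fin n, ¬ Function.Injective k → Z k = 0 := by
    intro k hk
    obtain ⟨a, b, hab, hne⟩ := Function.not_injective_iff.mp hk
    apply Finset.sum_involution (g := fun σ _ => σ * Equiv.swap a b)
    · intro σ _
      have key : TX (σ * Equiv.swap a b) k = TX σ k := by
        refine ncp_perm_congr (fun i => D.X (k i) (σ i))
          (fun i => D.X (k i) ((σ * Equiv.swap a b) i)) (Equiv.swap a b) ?_ _ _
        intro i
        simp only [Equiv.Perm.mul_apply]
        rcases eq_or_ne i a with rfl | hia
        · rw [Equiv.swap_apply_left, hab]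
        · rcases eq_or_ne i b with rfl | hib
          · rw [Equiv.swap_apply_right, ← hab]
          · rw [Equiv.swap_apply_of_ne_of_ne hia hib]
      rw [key]
      have hs : ((Equiv.Perm.sign (σ * Equiv.swap a b) : ℤ)) = -(Equiv.Perm.sign σ : ℤ) := by
        rw [Equiv.Perm.sign_mul, Equiv.Perm.sign_swap hne]
        simp
      rw [hs, neg_smul]
      abel
    · intro σ _ _ hcon
      have h1 : Equiv.swap a b = 1 := mul_left_cancel (a := σ) (by rw [hcon, mul_one])
      have h2 : b = a := by
        have h3 := congrArg (fun e : Equiv.Perm (Fin n) => e a) h1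
        simpa [Equiv.swap_apply_left] using h3
      exact hne h2.symm
    · intro σ _
      exact Finset.mem_univ _
    · intro σ _
      rw [mul_assoc, Equiv.swap_mul_self, mul_one]
  have e2 : ∑ k : Fin n → Fin n, Z k =
      ∑ k ∈ Finset.univ.filter (fun k : Fin n → Fin n => Function.Injective k), Z k := by
    symm
    apply Finset.sum_filter_of_ne
    intro k _ hZk
    by_contra hni
    exact hZk (hZ0 k hni)
  have e3 : ∑ k ∈ Finset.univ.filter (fun k : Fin n → Fin n => Function.Injective k), Z k =
      ∑ τ : Perm (Fin n), Z ⇑τ := by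
    refine Finset.sum_bij'
      (i := fun k hk => Equiv.ofBijective k (Finite.injective_iff_bijective.mp
        (Finset.mem_filter.mp hk).2))
      (j := fun τ _ => ⇑τ) ?_ ?_ ?_ ?_ ?_
    · intro k hk
      exact Finset.mem_univ _
    · intro τ _
      exact Finset.mem_filter.mpr ⟨Finset.mem_univ _, τ.injective⟩
    · intro k hk
      rfl
    · intro τ _
      exact Equiv.ext fun x => rfl
    · intro k hk
      rfl
  have e4 : ∀ τ : Perm (Fin n), Z ⇑τ =
      (Equiv.Perm.sign τ : ℤ) •
        ((∑ σ : Perm (Fin n), (Equiv.Perm.sign σ : ℤ) • F σ) * TY ⇑τ) := by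
    intro τ
    have ha : ∀ σ : Perm (Fin n), TX σ ⇑τ = F (σ * τ⁻¹) := by
      intro σ
      refine ncp_perm_congr (fun j => D.X j ((σ * τ⁻¹) j)) (fun i => D.X (τ i) (σ i)) τ ?_ _ _
      intro i
      simp [Equiv.Perm.mul_apply]
    simp only [hZ, ha]
    rw [← Equiv.sum_comp (Equiv.mulRight τ)
      (fun σ => (Equiv.Perm.sign σ : ℤ) • (F (σ * τ⁻¹) * TY ⇑τ))]
    simp only [Equiv.coe_mulRight, mul_inv_cancel_right]
    rw [Finset.sum_mul, Finset.smul_sum]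
    apply Finset.sum_congr rfl
    intro σ _
    rw [smul_mul_assoc, smul_smul]
    have : ((Equiv.Perm.sign (σ * τ) : ℤ)) = (Equiv.Perm.sign τ : ℤ) * (Equiv.Perm.sign σ : ℤ) := by
      rw [Equiv.Perm.sign_mul]
      push_cast
      ring
    rw [this]
  have e5 : ∑ τ : Perm (Fin n), Z ⇑τ =
      (∑ σ : Perm (Fin n), (Equiv.Perm.sign σ : ℤ) • F σ) *
        ∑ τ : Perm (Fin n), (Equiv.Perm.sign τ : ℤ) • TY ⇑τ := by
    rw [Finset.mul_sum]
    apply Finset.sum_congr rfl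
    intro τ _
    rw [e4 τ]
    exact (mul_smul_comm _ _ _).symm
  have e6 : ∑ σ : Perm (Fin n), (Equiv.Perm.sign σ : ℤ) • (List.ofFn fun i => D.X (σ i) i).prod =
      ∑ σ : Perm (Fin n), (Equiv.Perm.sign σ : ℤ) • F σ := by
    have hterm : ∀ σ : Perm (Fin n), (List.ofFn fun i => D.X (σ i) i).prod = F σ⁻¹ := by
      intro σ
      rw [ofFn_prod_eq_ncp _ (fun a _ b _ _ => D.hXc _ _ _ _)]
      refine ncp_perm_congr (fun j => D.X j (σ⁻¹ j)) (fun i => D.X (σ i) i) σ ?_ _ _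
      intro i
      simp
    calc ∑ σ : Perm (Fin n), (Equiv.Perm.sign σ : ℤ) • (List.ofFn fun i => D.X (σ i) i).prod
        = ∑ σ : Perm (Fin n), (Equiv.Perm.sign σ⁻¹ : ℤ) • F σ⁻¹ := by
          apply Finset.sum_congr rfl
          intro σ _
          rw [hterm σ, Equiv.Perm.sign_inv]
      _ = ∑ σ : Perm (Fin n), (Equiv.Perm.sign σ : ℤ) • F σ :=
          Equiv.sum_comp (Equiv.inv (Perm (Fin n)))
            (fun σ => (Equiv.Perm.sign σ : ℤ) • F σ)
  have e7 : ∑ τ : Perm (Fin n), (Equiv.Perm.sign τ : ℤ) • TY ⇑τ =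
      ∑ τ : Perm (Fin n), (Equiv.Perm.sign τ : ℤ) • (List.ofFn fun i => D.Y (τ i) i).prod := by
    apply Finset.sum_congr rfl
    intro τ _
    rw [ofFn_prod_eq_ncp _ (fun a _ b _ _ => D.hYc _ _ _ _)]
  rw [e1, e2, e3, e5, e6, e7]

theorem main :
    ∑ σ : Perm (Fin n), (Perm.sign σ : ℤ) • (List.ofFn fun i => D.tA σ i).prod =
      (∑ σ : Perm (Fin n), (Perm.sign σ : ℤ) • (List.ofFn fun i => D.X (σ i) i).prod) *
        (∑ τ : Perm (Fin n), (Perm.sign τ : ℤ) • (List.ofFn fun i => D.Y (τ i) i).prod) := by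
  rw [← D.top, ← D.bottom]
  have chain : ∀ m, m ≤ n → D.SS m = D.SS 0 := by
    intro m
    induction m with
    | zero => intro _; rfl
    | succ m ih => intro hm; rw [D.step m (by omega), ih (by omega)]
  exact chain n le_rfl

end TurnData


section Instance

open MvPolynomial

variable {R : Type*} [CommRing R]

lemma pderiv_comm' {σR : Type*} (a b : σR) (p : MvPolynomial σR R) :
    pderiv a (pderiv b p) = pderiv b (pderiv a p) := by
  classical
  induction p using MvPolynomial.induction_on' with
  | monomial s r =>
    simp only [pderiv_monomial]
    rcases eq_or_ne a b with rfl | hab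
    · rfl
    · congr 1
      · rw [tsub_tsub, tsub_tsub, add_comm]
      · rw [Finsupp.tsub_apply, Finsupp.tsub_apply, Finsupp.single_eq_of_ne hab,
          Finsupp.single_eq_of_ne (Ne.symm hab)]
        rw [Nat.sub_zero, Nat.sub_zero]
        ring
  | add p q hp hq => simp [hp, hq]

lemma pderiv_mulLeft (n : ℕ) (a b : Sym2 (Fin n)) :
    ((pderiv a).toLinearMap : Module.End R (MvPolynomial (Sym2 (Fin n)) R)) *
        LinearMap.mulLeft R (MvPolynomial.X b) =
      LinearMap.mulLeft R (MvPolynomial.X b) * (pderiv a).toLinearMap +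
        (if a = b then 1 else 0) := by
  apply LinearMap.ext
  intro p
  rcases eq_or_ne a b with rfl | hab
  · simp [Module.End.mul_apply, LinearMap.mulLeft_apply, pderiv_mul, pderiv_X_self,
      mul_comm, add_comm]
  · simp [Module.End.mul_apply, LinearMap.mulLeft_apply, pderiv_mul,
      pderiv_X_of_ne (Ne.symm hab), hab]

lemma pderiv_dcomm (n : ℕ) (a b : Sym2 (Fin n)) :
    ((pderiv a).toLinearMap : Module.End R (MvPolynomial (Sym2 (Fin n)) R)) *
        (pderiv b).toLinearMap =
      (pderiv b).toLinearMap * (pderiv a).toLinearMap := by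
  apply LinearMap.ext
  intro p
  simp [Module.End.mul_apply, pderiv_comm']

/-- The data for Turnbull's identity. -/
noncomputable def turnData (n : ℕ) (R : Type*) [CommRing R] (h : R) :
    TurnData (Module.End R (MvPolynomial (Sym2 (Fin n)) R)) n where
  X i j := turnX n R i j
  Y i j := turnPt n R h i j
  h := h • 1
  hXc a b c d := by
    apply LinearMap.ext
    intro p
    simp [turnX, Module.End.mul_apply, LinearMap.mulLeft_apply, mul_left_comm]
  hYc a b c d := by
    unfold turnPt turnP
    apply Commute.smul_left
    apply Commute.smul_right
    apply Commute.smul_left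
    apply Commute.smul_right
    exact pderiv_dcomm n _ _
  hXs a b := by
    unfold turnX
    rw [Sym2.eq_swap]
  hh z := by
    show _ * _ = _ * _
    rw [smul_mul_assoc, one_mul, mul_smul_comm, mul_one]
  hYX k i l j := by
    unfold turnPt turnP turnX
    rw [smul_mul_assoc, smul_mul_assoc, pderiv_mulLeft n (s(k, i)) (s(l, j)), smul_add,
      smul_add, mul_smul_comm, mul_smul_comm]
    congr 1
    by_cases h1 : k = l ∧ i = j <;> by_cases h2 : k = j ∧ i = l
    · have hki : k = i := by rw [h2.1, ← h1.2]
      rw [if_pos (Sym2.eq_iff.mpr (Or.inl h1)), if_pos h1, if_pos h2, if_pos hki, two_smul]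
    · have hki : k ≠ i := by
        intro e
        exact h2 ⟨by rw [e, h1.2], by rw [← e, h1.1]⟩
      rw [if_pos (Sym2.eq_iff.mpr (Or.inl h1)), if_pos h1, if_neg h2, if_neg hki, one_smul,
        add_zero]
    · have hki : k ≠ i := by
        intro e
        exact h1 ⟨by rw [e, h2.2], by rw [← e, h2.1]⟩
      rw [if_pos (Sym2.eq_iff.mpr (Or.inr h2)), if_neg h1, if_pos h2, if_neg hki, one_smul,
        zero_add]
    · have hne : ¬ (s(k, i) = s(l, j)) := by
        rw [Sym2.eq_iff]
        tauto
      rw [if_neg hne, if_neg h1, if_neg h2, smul_zero, smul_zero, add_zero]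

lemma tA_eq (n : ℕ) (h : R) (σ : Equiv.Perm (Fin n)) (i : Fin n) :
    (turnData n R h).tA σ i = turnA n R h (σ i) i := by
  unfold TurnData.tA turnA
  congr 1
  have hTD : (turnData n R h).h = h • (1 : Module.End R (MvPolynomial (Sym2 (Fin n)) R)) := rfl
  rw [hTD, ite_smul, zero_smul]
  by_cases hσ : σ i = i
  · rw [if_pos hσ, if_pos hσ]
    have hv : ((σ i : ℕ)) = (i : ℕ) := by rw [hσ]
    rw [hv]
    have hcast : (((n : ℤ) - ((i : ℕ) + 1) : ℤ) : R) = ((n - 1 - (i : ℕ) : ℕ) : R) := by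
      have hz : ((n : ℤ) - ((i : ℕ) + 1) : ℤ) = ((n - 1 - (i : ℕ) : ℕ) : ℤ) := by
        have := i.isLt
        omega
      exact_mod_cast congrArg (Int.cast : ℤ → R) hz
    rw [hcast, ← Nat.cast_smul_eq_nsmul R (n - 1 - (i : ℕ))
      (h • (1 : Module.End R (MvPolynomial (Sym2 (Fin n)) R))), smul_smul, mul_comm]
  · rw [if_neg hσ, if_neg hσ]

end Instance

/-- **Turnbull's symmetric identity** (operator form): the column-ordered
determinant of `A` equals `det X ∘ det p̃`. -/
theorem turnbull_identity (n : ℕ) (hn : 1 ≤ n) (R : Type*) [CommRing R] (h : R) :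
    ∑ σ : Equiv.Perm (Fin n), (Equiv.Perm.sign σ : ℤ) •
        (List.ofFn fun i => turnA n R h (σ i) i).prod =
      (∑ σ : Equiv.Perm (Fin n), (Equiv.Perm.sign σ : ℤ) •
          (List.ofFn fun i => turnX n R (σ i) i).prod) *
      (∑ τ : Equiv.Perm (Fin n), (Equiv.Perm.sign τ : ℤ) •
          (List.ofFn fun i => turnPt n R h (τ i) i).prod) := by
  have hm := (turnData n R h).main
  simp only [tA_eq, show (turnData n R h).X = turnX n R from rfl,
    show (turnData n R h).Y = turnPt n R h from rfl] at hm
  exact hm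
end

section
/- Combinatorial expansion of the Turnbull column determinant. With the operators of Turnbull's symmetric identity, i.e. on the polynomial ring S in the symmetric variables x_{i,j} = x_{j,i}, with p̃_{i,j} := (1+δ_{i,j})·P_{i,j} and A_{i,j} := (∑_{k=1}^n X_{k,i} ∘ p̃_{k,j}) + h·(n−i)·δ_{i,j}·id, one has: ∑_{σ ∈ S_n} sgn(σ) · A_{σ(1),1} ∘ ⋯ ∘ A_{σ(n),n} = ∑ sgn(a) · w₁ ∘ ⋯ ∘ w_n, where the sum on the right is over all triples consisting of a permutation a ∈ S_n, a function b : {1,…,n} → {1,…,n}, and a function d : {1,…,n} → {0,1,2} subject to: if d(i) = 1 then a_i = i and i+1 ≤ b(i) ≤ n; if d(i) = 2 then b(i) = i; and where the i-th factor is w_i := X_{b(i),a_i} ∘ P_{b(i),i} if d(i) ∈ {0,2} and w_i := h·id if d(i) = 1, composed in increasing order of i. -/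
/-- The summand operator in the combinatorial expansion. -/
noncomputable def turnF (n : ℕ) (R : Type*) [CommRing R] (h : R)
    (a : Equiv.Perm (Fin n)) (i : Fin n) (k : Fin n × Fin 3) :
    Module.End R (MvPolynomial (Sym2 (Fin n)) R) :=
  if (k.2 = 1 → a i = i ∧ (i : ℕ) < (k.1 : ℕ)) ∧ (k.2 = 2 → k.1 = i) then
    (if k.2 = 1 then h • 1 else turnX n R k.1 (a i) * turnP n R h k.1 i)
  else 0

private lemma prod_ofFn_sum {M κ : Type*} [Semiring M] [Fintype κ] :
    ∀ (m : ℕ) (f : Fin m → κ → M),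
      (List.ofFn fun i => ∑ k, f i k).prod
        = ∑ g : Fin m → κ, (List.ofFn fun i => f i (g i)).prod := by
  intro m
  induction m with
  | zero => intro f; simp
  | succ m ih =>
    intro f
    rw [show (∑ g : Fin (m+1) → κ, (List.ofFn fun i => f i (g i)).prod)
        = ∑ p : κ × (Fin m → κ), (List.ofFn fun i => f i ((Fin.consEquiv (fun _ => κ)).symm.symm p i)).prod
      from (((Fin.consEquiv (fun _ => κ)).symm.symm).sum_comp _).symm]
    rw [Fintype.sum_prod_type]
    simp only [Equiv.symm_symm, Fin.consEquiv_apply, List.ofFn_succ, List.prod_cons,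
      Fin.cons_zero, Fin.cons_succ]
    rw [ih fun i k => f i.succ k, Finset.sum_mul]
    exact Finset.sum_congr rfl fun k _ => Finset.mul_sum _ _ _

private lemma turnA_eq_sum (n : ℕ) (R : Type*) [CommRing R] (h : R)
    (a : Equiv.Perm (Fin n)) (i : Fin n) :
    turnA n R h (a i) i = ∑ k : Fin n × Fin 3, turnF n R h a i k := by
  have h02 : ¬ ((0:Fin 3) = 2) := by decide
  have h12 : ¬ ((1:Fin 3) = 2) := by decide
  have h21 : ¬ ((2:Fin 3) = 1) := by decide
  rw [Fintype.sum_prod_type]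
  simp only [turnF, Fin.sum_univ_three]
  norm_num [h02, h12, h21]
  rw [Finset.sum_add_distrib, Finset.sum_add_distrib]
  have e3 : (∑ x : Fin n, if x = i then turnX n R x (a i) * turnP n R h x i else 0)
      = turnX n R i (a i) * turnP n R h i i := by
    rw [Finset.sum_ite_eq' Finset.univ i (fun x => turnX n R x (a i) * turnP n R h x i)]
    simp
  have e1 : (∑ k : Fin n, turnX n R k (a i) * turnPt n R h k i)
      = (∑ x : Fin n, turnX n R x (a i) * turnP n R h x i)
        + turnX n R i (a i) * turnP n R h i i := by
    rw [← e3, ← Finset.sum_add_distrib]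
    refine Finset.sum_congr rfl fun k _ => ?_
    by_cases hk : k = i
    · subst hk
      simp [turnPt, two_smul, mul_add]
    · simp [turnPt, hk]
  have e2 : (∑ x : Fin n, if a i = i ∧ i < x then h • (1 : Module.End R (MvPolynomial (Sym2 (Fin n)) R)) else 0)
      = (if a i = i then h * (((n : ℤ) - (((a i : ℕ)) + 1) : ℤ) : R) else 0) • 1 := by
    by_cases hai : a i = i
    · simp only [hai, true_and, if_pos rfl]
      rw [← Finset.sum_filter, Finset.sum_const]
      have hfi : Finset.univ.filter (fun x : Fin n => i < x) = Finset.Ioi i := by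
        ext x; simp [Finset.mem_Ioi]
      rw [hfi, Fin.card_Ioi]
      have hc : (((n - 1 - (i:ℕ)) : ℕ) : R) = (((n:ℤ) - ((i:ℕ)+1) : ℤ) : R) := by
        have hi := i.isLt
        rw [show ((n:ℤ) - ((i:ℕ)+1)) = ((n - 1 - (i:ℕ) : ℕ) : ℤ) from by omega]
        simp
      rw [← Nat.cast_smul_eq_nsmul R, hc, smul_smul]
      simp [mul_comm]
    · simp [hai]
  rw [turnA, e1, e2, e3]
  abel

/-- **The combinatorial expansion of the Turnbull column determinant**:
the column-ordered determinant of `A` equals the sum, over all permutations `a`,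
functions `b : {1,…,n} → {1,…,n}` and `d : {1,…,n} → {0,1,2}` such that `d i = 1`
forces `a i = i` and `i + 1 ≤ b i ≤ n`, and `d i = 2` forces `b i = i`, of
`sgn(a) · w₁ ∘ ⋯ ∘ w_n` where `wᵢ = X_{b i, a i} ∘ P_{b i, i}` if `d i ∈ {0,2}`
and `wᵢ = h·id` if `d i = 1`. -/
theorem turnbull_combinatorial_expansion (n : ℕ) (R : Type*) [CommRing R] (h : R) :
    ∑ σ : Equiv.Perm (Fin n), (Equiv.Perm.sign σ : ℤ) •
        (List.ofFn fun i => turnA n R h (σ i) i).prod =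
      ∑ a : Equiv.Perm (Fin n), ∑ b : Fin n → Fin n, ∑ d : Fin n → Fin 3,
        if (∀ i : Fin n, d i = 1 → a i = i ∧ (i : ℕ) < (b i : ℕ)) ∧
            (∀ i : Fin n, d i = 2 → b i = i) then
          (Equiv.Perm.sign a : ℤ) •
            (List.ofFn fun i =>
              if d i = 1 then h • (1 : Module.End R (MvPolynomial (Sym2 (Fin n)) R))
              else turnX n R (b i) (a i) * turnP n R h (b i) i).prod
        else 0 := by
  have key : ∀ (a : Equiv.Perm (Fin n)) (b : Fin n → Fin n) (d : Fin n → Fin 3),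
      (if (∀ i : Fin n, d i = 1 → a i = i ∧ (i : ℕ) < (b i : ℕ)) ∧
            (∀ i : Fin n, d i = 2 → b i = i) then
          (Equiv.Perm.sign a : ℤ) •
            (List.ofFn fun i =>
              if d i = 1 then h • (1 : Module.End R (MvPolynomial (Sym2 (Fin n)) R))
              else turnX n R (b i) (a i) * turnP n R h (b i) i).prod
        else 0)
      = (Equiv.Perm.sign a : ℤ) • (List.ofFn fun i => turnF n R h a i (b i, d i)).prod := by
    intro a b d
    by_cases hc : (∀ i : Fin n, d i = 1 → a i = i ∧ (i : ℕ) < (b i : ℕ)) ∧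
        (∀ i : Fin n, d i = 2 → b i = i)
    · rw [if_pos hc]
      refine congrArg _ (congrArg List.prod (congrArg List.ofFn (funext fun i => ?_)))
      have hC : ((b i, d i).2 = 1 → a i = i ∧ (i : ℕ) < (((b i, d i).1 : Fin n) : ℕ)) ∧
          ((b i, d i).2 = 2 → (b i, d i).1 = i) :=
        ⟨fun h1 => hc.1 i h1, fun h2 => hc.2 i h2⟩
      rw [turnF, if_pos hC]
    · rw [if_neg hc]
      rw [not_and_or] at hc
      have hex : ∃ i : Fin n, turnF n R h a i (b i, d i) = 0 := by
        rcases hc with hc | hc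
        · push_neg at hc
          obtain ⟨i, h1, h2⟩ := hc
          refine ⟨i, ?_⟩
          rw [turnF, if_neg]
          rintro ⟨hcc, -⟩
          obtain ⟨ha, hb⟩ := hcc h1
          exact absurd hb (not_lt.mpr (h2 ha))
        · push_neg at hc
          obtain ⟨i, h1, h2⟩ := hc
          refine ⟨i, ?_⟩
          rw [turnF, if_neg]
          rintro ⟨-, hcc⟩
          exact h2 (hcc h1)
      obtain ⟨i, hi⟩ := hex
      rw [List.prod_eq_zero, smul_zero]
      rw [List.mem_ofFn]
      exact ⟨i, hi⟩
  simp only [key]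
  refine Finset.sum_congr rfl fun a _ => ?_
  rw [show (List.ofFn fun i => turnA n R h (a i) i)
      = List.ofFn fun i => ∑ k : Fin n × Fin 3, turnF n R h a i k from by
    congr 1; funext i; exact turnA_eq_sum n R h a i]
  rw [prod_ofFn_sum]
  have hsplit : (∑ g : Fin n → Fin n × Fin 3, (List.ofFn fun i => turnF n R h a i (g i)).prod)
      = ∑ b : Fin n → Fin n, ∑ d : Fin n → Fin 3,
          (List.ofFn fun i => turnF n R h a i (b i, d i)).prod := by
    rw [show (∑ g : Fin n → Fin n × Fin 3, (List.ofFn fun i => turnF n R h a i (g i)).prod)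
        = ∑ p : (Fin n → Fin n) × (Fin n → Fin 3),
            (List.ofFn fun i => turnF n R h a i
              ((Equiv.arrowProdEquivProdArrow (Fin n) (fun _ => Fin n) (fun _ => Fin 3)).symm p i)).prod
      from ((Equiv.arrowProdEquivProdArrow (Fin n) (fun _ => Fin n) (fun _ => Fin 3)).symm.sum_comp _).symm]
    rw [Fintype.sum_prod_type]
    simp [Equiv.arrowProdEquivProdArrow]
  rw [hsplit, Finset.smul_sum]
  exact Finset.sum_congr rfl fun b _ => Finset.smul_sum
end
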